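/- arXiv:0705.1025 — 9 statements merged into one kernel-verified Lean document; each statement's English description precedes it below -/
import Mathlib

section
/- Let G be a finite connected simple graph. Then G is a partial cube if and only if G is bipartite and Winkler's relation ∼_G is transitive on the edges of G (equivalently, since ∼_G is always reflexive and symmetric on the edges of a simple graph, ∼_G is an equivalence relation on the edges of G). -/
/-- Winkler's relation `∼_G` on (ordered representatives of) edges of a simple graph:
`pq ∼_G rs` iff `d(p,r) + d(q,s) ≠ d(p,s) + d(q,r)`. -/
def Winkler {V : Type*} (G : SimpleGraph V) (p q r s : V) : Prop :=
  G.dist p r + G.dist q s ≠ G.dist p s + G.dist q r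

/-!
If `f` embeds `G` isometrically into a hypercube, then `d(u, v) = ‖f u - f v‖²`, so by
polarization `pq ∼ rs` iff `f p - f q` and `f r - f s` are not orthogonal. Each edge changes
exactly one coordinate, hence `pq ∼ rs` iff both edges change the same coordinate, which is
transitive; the parity of the number of ones is a 2-colouring.

Conversely, in a connected bipartite graph an edge `pq` splits the vertices into those closer
to `p` and those closer to `q`, and `pq ∼ rs` iff `rs` crosses this split. Transitivity makes
`∼`-related edges induce the same split: otherwise a geodesic from a vertex on the wrong side
to `r` would contain an edge crossing the split of `pq` but not that of `rs`. Labelling each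
vertex, for every `∼`-class, by its side of the split of that class is then an isometric
embedding: an edge changes only the label of its own class, and a step along a geodesic away
from `u` changes that label away from the label of `u`.
-/

open Finset

namespace Winkler

variable {V : Type*} {G : SimpleGraph V} {p q r s : V}

lemma symm (h : Winkler G p q r s) : Winkler G r s p q := by
  unfold Winkler at *
  rw [G.dist_comm (u := r), G.dist_comm (u := s), G.dist_comm (u := r), G.dist_comm (u := s)]
  omega

lemma swap_right (h : Winkler G p q r s) : Winkler G p q s r := by
  unfold Winkler at *
  omega

lemma of_adj (h : G.Adj p q) : Winkler G p q p q := by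
  simp [Winkler, SimpleGraph.dist_eq_one_iff_adj.mpr h, SimpleGraph.dist_eq_one_iff_adj.mpr h.symm]

end Winkler

lemma hammingDist_eq_add_one {ι : Type*} {β : ι → Type*} [Fintype ι]
    [∀ i, DecidableEq (β i)] {x y z : ∀ i, β i} {i : ι} (hyz : y i ≠ z i)
    (hyz' : ∀ j, j ≠ i → y j = z j) (hxy : x i = y i) :
    hammingDist x z = hammingDist x y + 1 := by
  classical
  have : univ.filter (fun j => x j ≠ z j) = insert i (univ.filter fun j => x j ≠ y j) := by
    ext j
    by_cases hj : j = i
    · subst hj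
      simp [hxy, hyz]
    · simp [hj, hyz' j hj]
  rw [hammingDist, hammingDist, this, card_insert_of_notMem (by simp [hxy])]

lemma exists_ne_of_hammingDist_eq_one {ι : Type*} {β : ι → Type*} [Fintype ι]
    [∀ i, DecidableEq (β i)] {x y : ∀ i, β i} (h : hammingDist x y = 1) :
    ∃ i, x i ≠ y i ∧ ∀ j, j ≠ i → x j = y j := by
  obtain ⟨i, hi⟩ := card_eq_one.mp h
  have hmem (j : ι) : x j ≠ y j ↔ j = i := by simpa using Finset.ext_iff.mp hi j
  exact ⟨i, (hmem i).mpr rfl, fun j hj => not_not.mp (mt (hmem j).mp hj)⟩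

lemma hammingDist_add_hammingDist_sub {ι : Type*} [Fintype ι] (w x y z : ι → Bool) :
    ((hammingDist w y + hammingDist x z : ℕ) : ℤ) - (hammingDist w z + hammingDist x y : ℕ) =
      -2 * ∑ i, (((w i).toNat : ℤ) - (x i).toNat) * (((y i).toNat : ℤ) - (z i).toNat) := by
  simp only [hammingDist, card_filter, Nat.cast_add, Nat.cast_sum, mul_sum,
    ← sum_add_distrib, ← sum_sub_distrib]
  refine sum_congr rfl fun i _ => ?_
  cases w i <;> cases x i <;> cases y i <;> cases z i <;> decide

lemma hammingDist_cast_zmod_two {ι : Type*} [Fintype ι] (x y : ι → Bool) :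
    (hammingDist x y : ZMod 2) = ∑ i, ((x i).toNat : ZMod 2) + ∑ i, ((y i).toNat : ZMod 2) := by
  rw [hammingDist, card_filter, Nat.cast_sum, ← sum_add_distrib]
  refine sum_congr rfl fun i _ => ?_
  cases x i <;> cases y i <;> decide

namespace SimpleGraph

variable {V : Type*} {G : SimpleGraph V}

lemma exists_adj_dist_eq_of_dist_eq_add_one {u v : V} {n : ℕ} (h : G.dist u v = n + 1) :
    ∃ w, G.Adj u w ∧ G.dist w v = n := by
  obtain ⟨p, hp⟩ := exists_walk_of_dist_ne_zero (G := G) (by omega : G.dist u v ≠ 0)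
  cases p with
  | nil => simp at h
  | cons hadj q =>
    have := dist_le q
    have := hadj.reachable.dist_triangle_left v
    rw [Walk.length_cons] at hp
    rw [dist_eq_one_iff_adj.mpr hadj] at this
    exact ⟨_, hadj, by omega⟩

lemma Connected.eq_dist_of_forall_adj (hconn : G.Connected) (u : V) (F : V → ℕ) (hu : F u = 0)
    (hstep : ∀ v w, G.Adj v w → G.dist v u = G.dist w u + 1 → F v = F w + 1) (v : V) :
    F v = G.dist v u := by
  induction hn : G.dist v u generalizing v with
  | zero => rwa [(hconn.dist_eq_zero_iff).mp hn]
  | succ n ih =>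
    obtain ⟨w, hvw, hw⟩ := exists_adj_dist_eq_of_dist_eq_add_one hn
    rw [hstep v w hvw (by omega), ih w hw]

lemma Connected.dist_ne_dist_of_adj (hconn : G.Connected) (hbip : G.Colorable 2) (u : V)
    {v w : V} (hadj : G.Adj v w) : G.dist u v ≠ G.dist u w := by
  obtain ⟨c⟩ := hbip
  let c' : G.Coloring Bool := recolorOfEquiv G finTwoEquiv c
  obtain ⟨p, hp⟩ := hconn.exists_walk_length_eq_dist u v
  obtain ⟨q, hq⟩ := hconn.exists_walk_length_eq_dist u w
  intro h
  have hv := c'.even_length_iff_congr p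
  rw [hp, h, ← hq, c'.even_length_iff_congr q] at hv
  have := c'.valid hadj
  revert hv this
  cases c' u <;> cases c' v <;> cases c' w <;> decide

lemma Connected.dist_eq_dist_add_one_of_adj (hconn : G.Connected) (hbip : G.Colorable 2)
    (u : V) {v w : V} (hadj : G.Adj v w) :
    G.dist u v = G.dist u w + 1 ∨ G.dist u w = G.dist u v + 1 := by
  have := hconn.dist_ne_dist_of_adj hbip u hadj
  have := hadj.diff_dist_adj (u := u)
  omega

def closerTo (G : SimpleGraph V) (a b : V) : Set V := {x | G.dist x a < G.dist x b}

variable {p q r s : V}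

lemma compl_closerTo (hconn : G.Connected) (hbip : G.Colorable 2) (hpq : G.Adj p q) :
    (G.closerTo p q)ᶜ = G.closerTo q p := by
  ext x
  have := hconn.dist_eq_dist_add_one_of_adj hbip x hpq
  simp only [closerTo, Set.mem_compl_iff, Set.mem_ofPred_eq]
  omega

lemma winkler_iff_not_mem_closerTo_iff (hconn : G.Connected) (hbip : G.Colorable 2)
    (hpq : G.Adj p q) :
    Winkler G p q r s ↔ ¬(r ∈ G.closerTo p q ↔ s ∈ G.closerTo p q) := by
  have hr := hconn.dist_eq_dist_add_one_of_adj hbip r hpq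
  have hs := hconn.dist_eq_dist_add_one_of_adj hbip s hpq
  simp only [Winkler, closerTo, Set.mem_ofPred_eq, G.dist_comm (u := p), G.dist_comm (u := q)]
  omega

def WinklerTransitive (G : SimpleGraph V) : Prop :=
  ∀ p q r s t u : V, G.Adj p q → G.Adj r s → G.Adj t u →
    Winkler G p q r s → Winkler G r s t u → Winkler G p q t u

def winklerSetoid (htrans : G.WinklerTransitive) : Setoid G.Dart where
  r e e' := Winkler G e.fst e.snd e'.fst e'.snd
  iseqv := ⟨fun e => .of_adj e.adj, Winkler.symm,
    fun {e e' e''} h h' => htrans _ _ _ _ _ _ e.adj e'.adj e''.adj h h'⟩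

open Classical in
noncomputable def cutLabel (htrans : G.WinklerTransitive) (x : V)
    (c : Quotient (winklerSetoid htrans)) : Bool :=
  decide (x ∈ G.closerTo c.out.fst c.out.snd)

section Transitive

variable (hconn : G.Connected) (hbip : G.Colorable 2) (htrans : G.WinklerTransitive)
include hconn hbip htrans

lemma closerTo_subset_of_winkler (hpq : G.Adj p q) (hrs : G.Adj r s) (hW : Winkler G p q r s)
    (hr : r ∈ G.closerTo p q) : G.closerTo r s ⊆ G.closerTo p q := by
  intro x hx
  induction hn : G.dist x r generalizing x with
  | zero => rwa [(hconn.dist_eq_zero_iff).mp hn]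
  | succ n ih =>
    obtain ⟨y, hxy, hy⟩ := exists_adj_dist_eq_of_dist_eq_add_one hn
    have hys : y ∈ G.closerTo r s := by
      have := hxy.reachable.dist_triangle_left s
      rw [dist_eq_one_iff_adj.mpr hxy] at this
      simp only [closerTo, Set.mem_ofPred_eq] at hx ⊢
      omega
    by_contra hxpq
    have hWxy : Winkler G p q x y :=
      (winkler_iff_not_mem_closerTo_iff hconn hbip hpq).mpr (by simp [hxpq, ih hys hy])
    have hWrs : Winkler G r s x y := (htrans _ _ _ _ _ _ hxy hpq hrs hWxy.symm hW).symm
    exact (winkler_iff_not_mem_closerTo_iff hconn hbip hrs).mp hWrs (iff_of_true hx hys)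

lemma closerTo_eq_of_winkler (hpq : G.Adj p q) (hrs : G.Adj r s) (hW : Winkler G p q r s)
    (hr : r ∈ G.closerTo p q) : G.closerTo p q = G.closerTo r s := by
  refine (closerTo_subset_of_winkler hconn hbip htrans hpq hrs hW hr).antisymm' ?_
  have hs : s ∈ G.closerTo q p := by
    rw [← compl_closerTo hconn hbip hpq]
    exact fun hs => (winkler_iff_not_mem_closerTo_iff hconn hbip hpq).mp hW (iff_of_true hr hs)
  have hW' : Winkler G q p s r := by unfold Winkler at *; omega
  have := closerTo_subset_of_winkler hconn hbip htrans hpq.symm hrs.symm hW' hs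
  rwa [← compl_closerTo hconn hbip hpq, ← compl_closerTo hconn hbip hrs,
    Set.compl_subset_compl] at this

lemma closerTo_eq_or_eq_of_winkler (hpq : G.Adj p q) (hrs : G.Adj r s)
    (hW : Winkler G p q r s) :
    G.closerTo p q = G.closerTo r s ∨ G.closerTo p q = G.closerTo s r := by
  by_cases hr : r ∈ G.closerTo p q
  · exact .inl (closerTo_eq_of_winkler hconn hbip htrans hpq hrs hW hr)
  · have hs : s ∈ G.closerTo p q := by
      by_contra hs
      exact (winkler_iff_not_mem_closerTo_iff hconn hbip hpq).mp hW (iff_of_false hr hs)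
    exact .inr (closerTo_eq_of_winkler hconn hbip htrans hpq hrs.symm hW.swap_right hs)

lemma cutLabel_ne_iff (e : G.Dart) (x y : V) :
    cutLabel htrans x ⟦e⟧ ≠ cutLabel htrans y ⟦e⟧ ↔
      ¬(x ∈ G.closerTo e.fst e.snd ↔ y ∈ G.closerTo e.fst e.snd) := by
  have he := Quotient.mk_out (s := winklerSetoid htrans) e
  simp only [cutLabel, ne_eq, decide_eq_decide]
  rcases closerTo_eq_or_eq_of_winkler hconn hbip htrans (Quotient.out ⟦e⟧).adj e.adj he
    with h | h
  · rw [h]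
  · rw [h, ← compl_closerTo hconn hbip e.adj]
    simp only [Set.mem_compl_iff]
    tauto

lemma cutLabel_ne_iff_eq_mk {y v : V} (hyv : G.Adj y v)
    (c : Quotient (winklerSetoid htrans)) :
    cutLabel htrans y c ≠ cutLabel htrans v c ↔ c = ⟦⟨(y, v), hyv⟩⟧ := by
  induction c using Quotient.inductionOn with | h e =>
  rw [cutLabel_ne_iff hconn hbip, ← winkler_iff_not_mem_closerTo_iff hconn hbip e.adj,
    Quotient.eq]
  rfl

lemma dist_eq_hammingDist_cutLabel [Fintype (Quotient (winklerSetoid htrans))] (u v : V) :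
    G.dist u v = hammingDist (cutLabel htrans u) (cutLabel htrans v) := by
  rw [G.dist_comm]
  refine (hconn.eq_dist_of_forall_adj u (fun w => hammingDist (cutLabel htrans u)
    (cutLabel htrans w)) (hammingDist_self _) ?_ v).symm
  intro v y hvy hdist
  have hu : u ∈ G.closerTo y v := by
    simp only [closerTo, Set.mem_ofPred_eq, G.dist_comm (u := u)]
    omega
  have hy : y ∈ G.closerTo y v := by simp [closerTo, dist_eq_one_iff_adj.mpr hvy.symm]
  have hlabel := cutLabel_ne_iff_eq_mk hconn hbip htrans hvy.symm
  refine hammingDist_eq_add_one (i := ⟦⟨(y, v), hvy.symm⟩⟧) ((hlabel _).mpr rfl)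
    (fun j hj => not_not.mp (mt (hlabel j).mp hj)) ?_
  by_contra h
  exact (cutLabel_ne_iff hconn hbip htrans _ u y).mp h (iff_of_true hu hy)

end Transitive

lemma exists_fin_hammingIsometry {ι : Type*} [Fintype ι] (f : V → ι → Bool)
    (hf : ∀ u v, G.dist u v = hammingDist (f u) (f v)) :
    ∃ (d : ℕ) (g : V → Fin d → Bool), ∀ u v, G.dist u v = hammingDist (g u) (g v) := by
  let e := Fintype.equivFin ι
  refine ⟨_, fun x => f x ∘ e.symm, fun u v => ?_⟩
  rw [hf, hammingDist, hammingDist]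
  exact card_equiv e (by simp)

lemma Connected.exists_hammingIsometry [Finite V] (hconn : G.Connected) (hbip : G.Colorable 2)
    (htrans : G.WinklerTransitive) :
    ∃ (d : ℕ) (f : V → Fin d → Bool), ∀ u v, G.dist u v = hammingDist (f u) (f v) := by
  classical
  have := Fintype.ofFinite V
  exact exists_fin_hammingIsometry _ (dist_eq_hammingDist_cutLabel hconn hbip htrans)

section HammingIsometry

variable {ι : Type*} [Fintype ι] {f : V → ι → Bool}
  (hf : ∀ u v, G.dist u v = hammingDist (f u) (f v))
include hf

lemma exists_coord_ne_of_adj {p q : V} (hpq : G.Adj p q) :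
    ∃ i, f p i ≠ f q i ∧ ∀ j, j ≠ i → f p j = f q j :=
  exists_ne_of_hammingDist_eq_one ((hf p q).symm.trans (dist_eq_one_iff_adj.mpr hpq))

lemma winkler_iff_sum_ne_zero {p q r s : V} :
    Winkler G p q r s ↔
      ∑ i, (((f p i).toNat : ℤ) - (f q i).toNat) *
        (((f r i).toNat : ℤ) - (f s i).toNat) ≠ 0 := by
  have := hammingDist_add_hammingDist_sub (f p) (f q) (f r) (f s)
  rw [Winkler, hf, hf, hf, hf]
  omega

lemma winkler_iff_of_hammingIsometry {p q r s : V} {i : ι} (hi : f p i ≠ f q i)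
    (hpq : ∀ j, j ≠ i → f p j = f q j) : Winkler G p q r s ↔ f r i ≠ f s i := by
  rw [winkler_iff_sum_ne_zero hf,
    sum_eq_single i (fun j _ hj => by rw [hpq j hj, sub_self, zero_mul]) (by simp)]
  revert hi
  cases f p i <;> cases f q i <;> cases f r i <;> cases f s i <;> decide

lemma winklerTransitive_of_hammingIsometry : G.WinklerTransitive := by
  intro p q r s t u hpq hrs htu hW hW'
  obtain ⟨i, hi, hpq'⟩ := exists_coord_ne_of_adj hf hpq
  obtain ⟨j, hj, hrs'⟩ := exists_coord_ne_of_adj hf hrs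
  obtain ⟨k, hk, htu'⟩ := exists_coord_ne_of_adj hf htu
  rw [winkler_iff_of_hammingIsometry hf hi hpq'] at hW ⊢
  rw [winkler_iff_of_hammingIsometry hf hj hrs'] at hW'
  have hij : i = j := by_contra fun h => hW (hrs' i h)
  have hjk : j = k := by_contra fun h => hW' (htu' j h)
  subst hij hjk
  exact hk

lemma colorable_two_of_hammingIsometry : G.Colorable 2 := by
  let c : V → ZMod 2 := fun x => ∑ i, ((f x i).toNat : ZMod 2)
  have hvalid : ∀ {u v}, G.Adj u v → c u ≠ c v := by
    intro u v huv hc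
    have h1 : (1 : ZMod 2) = c u + c v := by
      rw [← hammingDist_cast_zmod_two, ← hf, dist_eq_one_iff_adj.mpr huv, Nat.cast_one]
    rw [hc, CharTwo.add_self_eq_zero] at h1
    exact one_ne_zero h1
  simpa using (Coloring.mk c hvalid).colorable

end HammingIsometry

end SimpleGraph

/-- A finite connected simple graph is a partial cube iff it is bipartite
(2-colorable) and Winkler's relation is transitive on its edges. -/
theorem partialCube_iff_bipartite_and_winkler_transitive
    {V : Type*} [Fintype V] (G : SimpleGraph V) (hconn : G.Connected) :
    (∃ (d : ℕ) (f : V → Fin d → Bool),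
        ∀ u v : V, G.dist u v = hammingDist (f u) (f v)) ↔
      (G.Colorable 2 ∧
        ∀ p q r s t u : V, G.Adj p q → G.Adj r s → G.Adj t u →
          Winkler G p q r s → Winkler G r s t u → Winkler G p q t u) := by
  constructor
  · rintro ⟨d, f, hf⟩
    exact ⟨G.colorable_two_of_hammingIsometry hf, G.winklerTransitive_of_hammingIsometry hf⟩
  · rintro ⟨hbip, htrans⟩
    exact hconn.exists_hammingIsometry hbip htrans
end

section
/- Every partial cube with n vertices (n ≥ 1) has at most n · log₂ n edges. -/
open Finset Real

section aux

variable {d : ℕ}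

lemma agree_of_hamming_one (x y : Fin d → Bool) (i : Fin d) (hi : x i ≠ y i)
    (h : hammingDist x y = 1) {j : Fin d} (hj : j ≠ i) : x j = y j := by
  have hcard : (Finset.univ.filter fun k => x k ≠ y k).card = 1 := h
  obtain ⟨k, hk⟩ := Finset.card_eq_one.mp hcard
  have hik : i ∈ (Finset.univ.filter fun k => x k ≠ y k) :=
    Finset.mem_filter.mpr ⟨Finset.mem_univ _, hi⟩
  rw [hk, Finset.mem_singleton] at hik
  by_contra hne
  have hjk : j ∈ (Finset.univ.filter fun k => x k ≠ y k) :=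
    Finset.mem_filter.mpr ⟨Finset.mem_univ _, hne⟩
  rw [hk, Finset.mem_singleton] at hjk
  exact hj (hjk.trans hik.symm)

lemma snd_det (x y : Fin d → Bool) (i : Fin d) (hi : x i ≠ y i)
    (h : hammingDist x y = 1) : y = fun j => if j = i then !x i else x j := by
  funext j
  by_cases hj : j = i
  · subst hj; simp only [if_pos rfl]
    revert hi; cases x j <;> cases y j <;> simp
  · simp only [if_neg hj]; exact (agree_of_hamming_one x y i hi h hj).symm

lemma fst_det (x y : Fin d → Bool) (i : Fin d) (hi : x i ≠ y i)
    (h : hammingDist x y = 1) : x = fun j => if j = i then !y i else y j := by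
  exact snd_det y x i (Ne.symm hi) (by rwa [hammingDist_comm])

lemma cross_le_fst (S T : Finset (Fin d → Bool)) (i : Fin d)
    (hne : ∀ x ∈ S, ∀ y ∈ T, x i ≠ y i) :
    ((S ×ˢ T).filter fun p => hammingDist p.1 p.2 = 1).card ≤ S.card := by
  apply Finset.card_le_card_of_injOn Prod.fst
  · intro p hp
    simp only [Finset.mem_coe, Finset.mem_filter, Finset.mem_product] at hp
    exact hp.1.1
  · intro p hp q hq h
    simp only [Finset.mem_coe, Finset.mem_filter, Finset.mem_product] at hp hq
    have hp2 := snd_det p.1 p.2 i (hne _ hp.1.1 _ hp.1.2) hp.2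
    have hq2 := snd_det q.1 q.2 i (hne _ hq.1.1 _ hq.1.2) hq.2
    exact Prod.ext h (by rw [hp2, hq2, h])

lemma cross_le_snd (S T : Finset (Fin d → Bool)) (i : Fin d)
    (hne : ∀ x ∈ S, ∀ y ∈ T, x i ≠ y i) :
    ((S ×ˢ T).filter fun p => hammingDist p.1 p.2 = 1).card ≤ T.card := by
  apply Finset.card_le_card_of_injOn Prod.snd
  · intro p hp
    simp only [Finset.mem_coe, Finset.mem_filter, Finset.mem_product] at hp
    exact hp.1.2
  · intro p hp q hq h
    simp only [Finset.mem_coe, Finset.mem_filter, Finset.mem_product] at hp hq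
    have hp1 := fst_det p.1 p.2 i (hne _ hp.1.1 _ hp.1.2) hp.2
    have hq1 := fst_det q.1 q.2 i (hne _ hq.1.1 _ hq.1.2) hq.2
    exact Prod.ext (by rw [hp1, hq1, h]) h

lemma key_ineq (a b : ℝ) (ha : 1 ≤ a) (hab : a ≤ b) :
    a * Real.logb 2 a + b * Real.logb 2 b + a ≤ (a + b) * Real.logb 2 (a + b) := by
  have hb : 1 ≤ b := ha.trans hab
  have ha0 : (0:ℝ) < a := by linarith
  have hb0 : (0:ℝ) < b := by linarith
  have h2a : Real.logb 2 (2 * a) = 1 + Real.logb 2 a := by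
    rw [Real.logb_mul (by norm_num) (by linarith), Real.logb_self_eq_one (by norm_num)]
  have h1 : Real.logb 2 (2 * a) ≤ Real.logb 2 (a + b) :=
    Real.logb_le_logb_of_le (by norm_num) (by linarith) (by linarith)
  have h2 : Real.logb 2 b ≤ Real.logb 2 (a + b) :=
    Real.logb_le_logb_of_le (by norm_num) hb0 (by linarith)
  have t1 : a * (1 + Real.logb 2 a) ≤ a * Real.logb 2 (a + b) := by
    rw [← h2a]; exact mul_le_mul_of_nonneg_left h1 (le_of_lt ha0)
  have t2 : b * Real.logb 2 b ≤ b * Real.logb 2 (a + b) :=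
    mul_le_mul_of_nonneg_left h2 (le_of_lt hb0)
  nlinarith [t1, t2]

lemma hypercube_bound (d : ℕ) (S : Finset (Fin d → Bool)) :
    ((((S ×ˢ S).filter fun p => hammingDist p.1 p.2 = 1)).card : ℝ)
      ≤ 2 * S.card * Real.logb 2 S.card := by
  induction S using Finset.strongInduction with
  | _ S ih =>
  by_cases h1 : S.card ≤ 1
  · have hfe : (S ×ˢ S).filter (fun p => hammingDist p.1 p.2 = 1) = ∅ := by
      rw [Finset.filter_eq_empty_iff]
      intro p hp
      rw [Finset.mem_product] at hp
      have heq : p.1 = p.2 := Finset.card_le_one.mp h1 _ hp.1 _ hp.2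
      simp [heq]
    rw [hfe]
    rcases Nat.le_one_iff_eq_zero_or_eq_one.mp h1 with h | h <;> simp [h]
  · push_neg at h1
    obtain ⟨x, hx, y, hy, hxy⟩ := Finset.one_lt_card.mp h1
    obtain ⟨i, hi⟩ := Function.ne_iff.mp hxy
    set S₀ := S.filter (fun v => v i = false) with hS₀
    set S₁ := S.filter (fun v => v i = true) with hS₁
    have hmem₀ : ∀ v ∈ S₀, v i = false := fun v hv => (Finset.mem_filter.mp hv).2
    have hmem₁ : ∀ v ∈ S₁, v i = true := fun v hv => (Finset.mem_filter.mp hv).2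
    have hne01 : ∀ x ∈ S₀, ∀ y ∈ S₁, x i ≠ y i := by
      intro u hu v hv
      rw [hmem₀ u hu, hmem₁ v hv]; simp
    have hne10 : ∀ x ∈ S₁, ∀ y ∈ S₀, x i ≠ y i := by
      intro u hu v hv
      rw [hmem₁ u hu, hmem₀ v hv]; simp
    have hb : (x i = false ∧ y i = true) ∨ (x i = true ∧ y i = false) := by
      revert hi; cases x i <;> cases y i <;> simp
    have h0ne : S₀.Nonempty := by
      rcases hb with ⟨h', _⟩ | ⟨_, h'⟩
      · exact ⟨x, Finset.mem_filter.mpr ⟨hx, h'⟩⟩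
      · exact ⟨y, Finset.mem_filter.mpr ⟨hy, h'⟩⟩
    have h1ne : S₁.Nonempty := by
      rcases hb with ⟨_, h'⟩ | ⟨h', _⟩
      · exact ⟨y, Finset.mem_filter.mpr ⟨hy, h'⟩⟩
      · exact ⟨x, Finset.mem_filter.mpr ⟨hx, h'⟩⟩
    have hsub0 : S₀ ⊂ S := by
      rw [Finset.filter_ssubset]
      obtain ⟨v, hv⟩ := h1ne
      exact ⟨v, (Finset.mem_filter.mp hv).1, by simp [hmem₁ v hv]⟩
    have hsub1 : S₁ ⊂ S := by
      rw [Finset.filter_ssubset]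
      obtain ⟨v, hv⟩ := h0ne
      exact ⟨v, (Finset.mem_filter.mp hv).1, by simp [hmem₀ v hv]⟩
    have he : S.filter (fun v => ¬ (v i = false)) = S₁ :=
      Finset.filter_congr (fun v _ => by cases v i <;> simp)
    have hcardsum : S₀.card + S₁.card = S.card := by
      calc S₀.card + S₁.card
          = (S.filter (fun v => v i = false)).card
            + (S.filter (fun v => ¬ (v i = false))).card := by rw [he]
        _ = S.card := Finset.card_filter_add_card_filter_not _
    -- split the product
    have hprodsub : S ×ˢ S ⊆ (S₀ ×ˢ S₀ ∪ S₀ ×ˢ S₁) ∪ (S₁ ×ˢ S₀ ∪ S₁ ×ˢ S₁) := by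
      intro p hp
      rw [Finset.mem_product] at hp
      simp only [Finset.mem_union, Finset.mem_product]
      have m1 : p.1 ∈ S₀ ∨ p.1 ∈ S₁ := by
        cases hp1 : p.1 i
        · exact Or.inl (Finset.mem_filter.mpr ⟨hp.1, hp1⟩)
        · exact Or.inr (Finset.mem_filter.mpr ⟨hp.1, hp1⟩)
      have m2 : p.2 ∈ S₀ ∨ p.2 ∈ S₁ := by
        cases hp2 : p.2 i
        · exact Or.inl (Finset.mem_filter.mpr ⟨hp.2, hp2⟩)
        · exact Or.inr (Finset.mem_filter.mpr ⟨hp.2, hp2⟩)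
      tauto
    have hsplit : ((S ×ˢ S).filter fun p => hammingDist p.1 p.2 = 1).card ≤
        ((S₀ ×ˢ S₀).filter fun p => hammingDist p.1 p.2 = 1).card +
        ((S₀ ×ˢ S₁).filter fun p => hammingDist p.1 p.2 = 1).card +
        (((S₁ ×ˢ S₀).filter fun p => hammingDist p.1 p.2 = 1).card +
        ((S₁ ×ˢ S₁).filter fun p => hammingDist p.1 p.2 = 1).card) := by
      calc ((S ×ˢ S).filter fun p => hammingDist p.1 p.2 = 1).card
          ≤ (((S₀ ×ˢ S₀ ∪ S₀ ×ˢ S₁) ∪ (S₁ ×ˢ S₀ ∪ S₁ ×ˢ S₁)).filter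
              fun p => hammingDist p.1 p.2 = 1).card :=
            Finset.card_le_card (Finset.filter_subset_filter _ hprodsub)
        _ ≤ _ := by
            simp only [Finset.filter_union]
            refine le_trans (Finset.card_union_le _ _) ?_
            gcongr <;> exact Finset.card_union_le _ _
    have ihA := ih S₀ hsub0
    have ihD := ih S₁ hsub1
    have ha1 : 1 ≤ S₀.card := Finset.card_pos.mpr h0ne
    have hb1 : 1 ≤ S₁.card := Finset.card_pos.mpr h1ne
    have hN : (((S ×ˢ S).filter fun p => hammingDist p.1 p.2 = 1).card : ℝ) ≤
        ((S₀ ×ˢ S₀).filter fun p => hammingDist p.1 p.2 = 1).card +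
        ((S₀ ×ˢ S₁).filter fun p => hammingDist p.1 p.2 = 1).card +
        (((S₁ ×ˢ S₀).filter fun p => hammingDist p.1 p.2 = 1).card +
        ((S₁ ×ˢ S₁).filter fun p => hammingDist p.1 p.2 = 1).card) := by
      exact_mod_cast hsplit
    rcases le_total S₀.card S₁.card with hab | hab
    · have hB : ((S₀ ×ˢ S₁).filter fun p => hammingDist p.1 p.2 = 1).card ≤ S₀.card :=
        cross_le_fst S₀ S₁ i hne01
      have hC : ((S₁ ×ˢ S₀).filter fun p => hammingDist p.1 p.2 = 1).card ≤ S₀.card :=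
        cross_le_snd S₁ S₀ i hne10
      have hkey := key_ineq (S₀.card : ℝ) (S₁.card : ℝ) (by exact_mod_cast ha1)
        (by exact_mod_cast hab)
      have hcs : ((S₀.card : ℝ) + S₁.card) = (S.card : ℝ) := by exact_mod_cast hcardsum
      have hB' : (((S₀ ×ˢ S₁).filter fun p => hammingDist p.1 p.2 = 1).card : ℝ) ≤ S₀.card := by
        exact_mod_cast hB
      have hC' : (((S₁ ×ˢ S₀).filter fun p => hammingDist p.1 p.2 = 1).card : ℝ) ≤ S₀.card := by
        exact_mod_cast hC
      rw [← hcs]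
      nlinarith [ihA, ihD, hkey, hN, hB', hC']
    · have hB : ((S₀ ×ˢ S₁).filter fun p => hammingDist p.1 p.2 = 1).card ≤ S₁.card :=
        cross_le_snd S₀ S₁ i hne01
      have hC : ((S₁ ×ˢ S₀).filter fun p => hammingDist p.1 p.2 = 1).card ≤ S₁.card :=
        cross_le_fst S₁ S₀ i hne10
      have hkey := key_ineq (S₁.card : ℝ) (S₀.card : ℝ) (by exact_mod_cast hb1)
        (by exact_mod_cast hab)
      rw [add_comm ((S₁.card : ℝ)) ((S₀.card : ℝ))] at hkey
      have hcs : ((S₀.card : ℝ) + S₁.card) = (S.card : ℝ) := by exact_mod_cast hcardsum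
      have hB' : (((S₀ ×ˢ S₁).filter fun p => hammingDist p.1 p.2 = 1).card : ℝ) ≤ S₁.card := by
        exact_mod_cast hB
      have hC' : (((S₁ ×ˢ S₀).filter fun p => hammingDist p.1 p.2 = 1).card : ℝ) ≤ S₁.card := by
        exact_mod_cast hC
      rw [← hcs]
      nlinarith [ihA, ihD, hkey, hN, hB', hC']

end aux

/-- Every partial cube with `n ≥ 1` vertices has at most `n * log₂ n` edges. -/
theorem partialCube_edge_bound
    {V : Type*} [Fintype V] (G : SimpleGraph V) [DecidableRel G.Adj]
    (hconn : G.Connected)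
    (hcube : ∃ (d : ℕ) (f : V → Fin d → Bool),
        ∀ u v : V, G.dist u v = hammingDist (f u) (f v))
    (hn : 1 ≤ Fintype.card V) :
    (G.edgeFinset.card : ℝ) ≤
      (Fintype.card V : ℝ) * Real.logb 2 (Fintype.card V) := by
  classical
  obtain ⟨d, f, hf⟩ := hcube
  have hfinj : Function.Injective f := by
    intro u v huv
    have : G.dist u v = 0 := by rw [hf, huv, hammingDist_self]
    exact (hconn.dist_eq_zero_iff).mp this
  set S : Finset (Fin d → Bool) := Finset.univ.image f with hS
  have hScard : S.card = Fintype.card V := by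
    rw [hS, Finset.card_image_of_injective _ hfinj, Finset.card_univ]
  -- map darts into the filtered pair set
  have hdarts : Fintype.card G.Dart ≤
      ((S ×ˢ S).filter fun p => hammingDist p.1 p.2 = 1).card := by
    rw [← Fintype.card_coe (((S ×ˢ S).filter fun p => hammingDist p.1 p.2 = 1))]
    apply Fintype.card_le_of_injective
      (fun e => ⟨(f e.toProd.1, f e.toProd.2), by
        rcases e with ⟨⟨u, v⟩, huv⟩
        simp only [Finset.mem_filter, Finset.mem_product]
        refine ⟨⟨Finset.mem_image_of_mem f (Finset.mem_univ _),
          Finset.mem_image_of_mem f (Finset.mem_univ _)⟩, ?_⟩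
        have : G.dist u v = 1 := SimpleGraph.dist_eq_one_iff_adj.mpr huv
        rw [hf] at this
        exact this⟩)
    intro e₁ e₂ h
    have h' : (f e₁.toProd.1, f e₁.toProd.2) = (f e₂.toProd.1, f e₂.toProd.2) :=
      congrArg Subtype.val h
    have h1 : e₁.toProd.1 = e₂.toProd.1 := hfinj (congrArg Prod.fst h')
    have h2 : e₁.toProd.2 = e₂.toProd.2 := hfinj (congrArg Prod.snd h')
    exact SimpleGraph.Dart.ext _ _ (Prod.ext h1 h2)
  have hbound := hypercube_bound d S
  have h2e : 2 * G.edgeFinset.card = Fintype.card G.Dart :=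
    (SimpleGraph.dart_card_eq_twice_card_edges G).symm
  have : (2 * G.edgeFinset.card : ℝ) ≤ 2 * S.card * Real.logb 2 S.card := by
    calc (2 * G.edgeFinset.card : ℝ) = (Fintype.card G.Dart : ℝ) := by exact_mod_cast h2e
      _ ≤ (((S ×ˢ S).filter fun p => hammingDist p.1 p.2 = 1).card : ℝ) := by
          exact_mod_cast hdarts
      _ ≤ 2 * S.card * Real.logb 2 S.card := hbound
  rw [hScard] at this
  linarith
end

section
/- Let G be a partial cube and let pq be an edge of G. Then every vertex of G is an endpoint of at most one edge in [pq]: if vw and vw′ are edges of G with pq ∼_G vw and pq ∼_G vw′, then w = w′. -/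
section Hamming

variable {ι β : Type*} [Fintype ι] [DecidableEq β]

theorem hammingDist_eq_one_iff {x y : ι → β} :
    hammingDist x y = 1 ↔ ∃ i, ∀ k, x k ≠ y k ↔ k = i := by
  simp only [hammingDist, Finset.card_eq_one, Finset.ext_iff, Finset.mem_filter,
    Finset.mem_univ, true_and, Finset.mem_singleton]

theorem hammingDist_add_hammingDist_comm_of_forall {x y z t : ι → β}
    (h : ∀ k, x k = y k ∨ z k = t k) :
    hammingDist x z + hammingDist y t = hammingDist x t + hammingDist y z := by
  simp only [hammingDist, Finset.card_filter, ← Finset.sum_add_distrib]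
  refine Finset.sum_congr rfl fun k _ => ?_
  rcases h k with h | h <;> rw [h, add_comm]

end Hamming

theorem Bool.funext_of_forall_ne_iff {ι : Type*} {x y z : ι → Bool}
    (h : ∀ k, x k ≠ y k ↔ x k ≠ z k) : y = z := by
  funext k
  have hk := h k
  revert hk
  cases x k <;> cases y k <;> cases z k <;> decide

section Isometry

open SimpleGraph

variable {V ι β : Type*} [Fintype ι] [DecidableEq β] {G : SimpleGraph V} {f : V → ι → β}

theorem exists_apply_ne_apply_iff_of_adj (hf : ∀ u v, G.dist u v = hammingDist (f u) (f v))
    {a b : V} (hab : G.Adj a b) : ∃ i, ∀ k, f a k ≠ f b k ↔ k = i := by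
  rw [← hammingDist_eq_one_iff, ← hf, dist_eq_one_iff_adj]
  exact hab

theorem Winkler.apply_ne_apply_iff (hf : ∀ u v, G.dist u v = hammingDist (f u) (f v))
    {p q a b : V} {i : ι} (hpq : ∀ k, f p k ≠ f q k ↔ k = i) (hab : G.Adj a b)
    (hw : Winkler G p q a b) : ∀ k, f a k ≠ f b k ↔ k = i := by
  obtain ⟨j, hj⟩ := exists_apply_ne_apply_iff_of_adj hf hab
  suffices j = i from this ▸ hj
  by_contra hji
  refine hw ?_
  simp only [hf]
  refine hammingDist_add_hammingDist_comm_of_forall fun k => ?_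
  by_cases hki : k = i
  · exact .inr (not_not.mp fun h => hji (hki ▸ (hj k).mp h).symm)
  · exact .inl (not_not.mp fun h => hki ((hpq k).mp h))

end Isometry

theorem partialCube_at_most_one_class_edge_per_vertex_general
    {V : Type*} (G : SimpleGraph V)
    (hcube : ∃ (d : ℕ) (f : V → Fin d → Bool),
        ∀ u v : V, G.dist u v = hammingDist (f u) (f v))
    {p q : V} (hpq : G.Adj p q) {v w w' : V}
    (hvw : G.Adj v w) (hvw' : G.Adj v w')
    (h1 : Winkler G p q v w) (h2 : Winkler G p q v w') :
    w = w' := by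
  obtain ⟨d, f, hf⟩ := hcube
  obtain ⟨i, hi⟩ := exists_apply_ne_apply_iff_of_adj hf hpq
  have hw := h1.apply_ne_apply_iff hf hi hvw
  have hw' := h2.apply_ne_apply_iff hf hi hvw'
  have hf_eq : f w = f w' := Bool.funext_of_forall_ne_iff fun k => by rw [hw, hw']
  have hdist : G.dist w w' = 0 := by rw [hf, hf_eq, hammingDist_self]
  exact ((hvw.symm.reachable.trans hvw'.reachable).dist_eq_zero_iff).mp hdist

/-- In a partial cube, every vertex is an endpoint of at most one edge of the
Winkler class `[pq]` of an edge `pq`. -/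
theorem partialCube_at_most_one_class_edge_per_vertex
    {V : Type*} [Fintype V] (G : SimpleGraph V) (hconn : G.Connected)
    (hcube : ∃ (d : ℕ) (f : V → Fin d → Bool),
        ∀ u v : V, G.dist u v = hammingDist (f u) (f v))
    {p q : V} (hpq : G.Adj p q) {v w w' : V}
    (hvw : G.Adj v w) (hvw' : G.Adj v w')
    (h1 : Winkler G p q v w) (h2 : Winkler G p q v w') :
    w = w' :=
  partialCube_at_most_one_class_edge_per_vertex_general G hcube hpq hvw hvw' h1 h2
end

section
/- Let G be a partial cube and let pq be an edge of G. Then every connected spanning subgraph of G (in particular, every spanning tree of G) contains an edge rs with pq ∼_G rs. -/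
open Finset

lemma SimpleGraph.Walk.exists_adj_apply_ne {V α : Type*} {H : SimpleGraph V} {a b : V}
    (w : H.Walk a b) (g : V → α) (hab : g a ≠ g b) : ∃ r s, H.Adj r s ∧ g r ≠ g s := by
  obtain ⟨e, -, hr, hs⟩ := w.exists_boundary_dart {v | g v = g a} rfl (Ne.symm hab)
  exact ⟨e.fst, e.snd, e.adj, fun h => hs (h.symm.trans hr)⟩

lemma exists_ne_forall_eq_of_hammingDist_eq_one {ι : Type*} [Fintype ι] {β : ι → Type*}
    [∀ i, DecidableEq (β i)] {x y : ∀ i, β i} (h : hammingDist x y = 1) :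
    ∃ i, x i ≠ y i ∧ ∀ j ≠ i, x j = y j := by
  obtain ⟨i, hi⟩ := card_eq_one.1 h
  have hmem : ∀ j, x j ≠ y j ↔ j = i := fun j => by
    simpa using congrArg (j ∈ ·) hi
  exact ⟨i, (hmem i).2 rfl, fun j hj => not_not.1 fun hne => hj ((hmem j).1 hne)⟩

lemma intCast_hammingDist_eq_sum {ι β : Type*} [Fintype ι] [DecidableEq β] (x y : ι → β) :
    (hammingDist x y : ℤ) = ∑ j, if x j ≠ y j then 1 else 0 := by
  rw [hammingDist, card_filter]
  push_cast
  rfl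

lemma hammingDist_add_hammingDist_ne_of_flip_same {ι : Type*} [Fintype ι] {x y z w : ι → Bool} {i : ι}
    (hxy : ∀ j ≠ i, x j = y j) (hxyi : x i ≠ y i) (hzw : z i ≠ w i) :
    hammingDist x z + hammingDist y w ≠ hammingDist x w + hammingDist y z := by
  intro h
  have hsum : ∑ j, ((if x j ≠ z j then 1 else 0) + (if y j ≠ w j then 1 else 0)
      - (if x j ≠ w j then 1 else 0) - (if y j ≠ z j then 1 else 0) : ℤ) = 0 := by
    simp only [sum_sub_distrib, sum_add_distrib, ← intCast_hammingDist_eq_sum]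
    omega
  rw [sum_eq_single i (fun j _ hj => by rw [hxy j hj]; ring) (by simp)] at hsum
  revert hsum hxyi hzw
  cases x i <;> cases y i <;> cases z i <;> cases w i <;> decide

theorem partialCube_spanning_subgraph_meets_class_general
    {V : Type*} (G : SimpleGraph V)
    (hcube : ∃ (d : ℕ) (f : V → Fin d → Bool),
        ∀ u v : V, G.dist u v = hammingDist (f u) (f v))
    {p q : V} (hpq : G.Adj p q)
    (H : SimpleGraph V) (hHconn : H.Connected) :
    ∃ r s : V, H.Adj r s ∧ Winkler G p q r s := by
  obtain ⟨d, f, hf⟩ := hcube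
  have hpq_flip : hammingDist (f p) (f q) = 1 := by
    rw [← hf, SimpleGraph.dist_eq_one_iff_adj]
    exact hpq
  obtain ⟨i, hi, hothers⟩ := exists_ne_forall_eq_of_hammingDist_eq_one hpq_flip
  obtain ⟨w⟩ := hHconn.preconnected p q
  obtain ⟨r, s, hrs, hrsi⟩ := w.exists_adj_apply_ne (f · i) hi
  refine ⟨r, s, hrs, ?_⟩
  rw [Winkler, hf p r, hf q s, hf p s, hf q r]
  exact hammingDist_add_hammingDist_ne_of_flip_same hothers hi hrsi

/-- In a partial cube, every connected spanning subgraph contains an edge of the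
Winkler class of any given edge `pq`. -/
theorem partialCube_spanning_subgraph_meets_class
    {V : Type*} [Fintype V] (G : SimpleGraph V) (hconn : G.Connected)
    (hcube : ∃ (d : ℕ) (f : V → Fin d → Bool),
        ∀ u v : V, G.dist u v = hammingDist (f u) (f v))
    {p q : V} (hpq : G.Adj p q)
    (H : SimpleGraph V) (hH : H ≤ G) (hHconn : H.Connected) :
    ∃ r s : V, H.Adj r s ∧ Winkler G p q r s :=
  partialCube_spanning_subgraph_meets_class_general G hcube hpq H hHconn
end

section
/- Let G be a partial cube with n vertices. Then there is a set S of at most n − 1 edges of G such that every edge of G is related by ∼_G to some edge of S; consequently, ∼_G has at most n − 1 equivalence classes on the edges of G. -/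
open Finset SimpleGraph

theorem hammingDist_add_ne_of_flip {ι : Type*} [Fintype ι] {p q r s : ι → Bool} {i : ι}
    (hpq : ∀ j, p j ≠ q j ↔ j = i) (hrs : ∀ j, r j ≠ s j ↔ j = i) :
    hammingDist p r + hammingDist q s ≠ hammingDist p s + hammingDist q r := by
  classical
  have hsum (x y : ι → Bool) : hammingDist x y = ∑ j, if x j ≠ y j then 1 else 0 :=
    card_filter _ _
  have hoff : ∑ j ∈ {i}ᶜ, ((if p j ≠ r j then 1 else 0) + if q j ≠ s j then 1 else 0) =
      ∑ j ∈ {i}ᶜ, ((if p j ≠ s j then 1 else 0) + if q j ≠ r j then 1 else 0) := by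
    refine sum_congr rfl fun j hj => ?_
    rw [mem_compl, mem_singleton] at hj
    rw [of_not_not (mt (hpq j).1 hj), of_not_not (mt (hrs j).1 hj)]
  simp only [hsum, ← sum_add_distrib]
  rw [Fintype.sum_eq_add_sum_compl i, Fintype.sum_eq_add_sum_compl i, hoff, Ne, add_left_inj]
  have hpqi := (hpq i).2 rfl
  have hrsi := (hrs i).2 rfl
  revert hpqi hrsi
  cases p i <;> cases q i <;> cases r i <;> cases s i <;> decide

theorem Sym2.out_mk_eq_or_eq_swap {α : Type*} (a b : α) :
    s(a, b).out = (a, b) ∨ s(a, b).out = (b, a) := by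
  rcases Sym2.eq_iff.1 (Quot.out_eq s(a, b)) with ⟨h₁, h₂⟩ | ⟨h₁, h₂⟩
  exacts [.inl (Prod.ext h₁ h₂), .inr (Prod.ext h₁ h₂)]

namespace SimpleGraph

variable {V : Type*} {G : SimpleGraph V}

theorem Walk.exists_dart_ne {α : Type*} (g : V → α) {u v : V} (w : G.Walk u v)
    (h : g u ≠ g v) : ∃ x ∈ w.darts, g x.fst ≠ g x.snd := by
  obtain ⟨x, hx, hfst, hsnd⟩ := w.exists_boundary_dart {y | g y = g u} rfl h.symm
  exact ⟨x, hx, fun hx' => hsnd (hx'.symm.trans hfst)⟩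

theorem adj_out_of_mem_edgeSet {e : Sym2 V} (he : e ∈ G.edgeSet) : G.Adj e.out.1 e.out.2 := by
  rwa [← mem_edgeSet, Sym2.mk, Quot.out_eq]

variable {ι : Type*} [Fintype ι] {f : V → ι → Bool}
  (hf : ∀ u v, G.dist u v = hammingDist (f u) (f v))
include hf

theorem exists_flip_of_adj {a b : V} (h : G.Adj a b) : ∃ i, ∀ j, f a j ≠ f b j ↔ j = i := by
  classical
  have hone : hammingDist (f a) (f b) = 1 := by rw [← hf, dist_eq_one_iff_adj.2 h]
  obtain ⟨i, hi⟩ := card_eq_one.1 hone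
  exact ⟨i, fun j => by simpa using congrArg (j ∈ ·) hi⟩

theorem winkler_of_flip {p q r s : V} {i : ι} (hpq : G.Adj p q) (hrs : G.Adj r s)
    (hpqi : f p i ≠ f q i) (hrsi : f r i ≠ f s i) : Winkler G p q r s := by
  obtain ⟨j, hj⟩ := exists_flip_of_adj hf hpq
  obtain ⟨k, hk⟩ := exists_flip_of_adj hf hrs
  obtain rfl : j = i := ((hj i).1 hpqi).symm
  obtain rfl : k = j := ((hk j).1 hrsi).symm
  rw [Winkler, hf, hf, hf, hf]
  exact hammingDist_add_ne_of_flip hj hk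

end SimpleGraph

theorem partialCube_at_most_n_sub_one_classes_general
    {V : Type*} [Fintype V] (G : SimpleGraph V)
    (hconn : G.Connected)
    (hcube : ∃ (d : ℕ) (f : V → Fin d → Bool),
        ∀ u v : V, G.dist u v = hammingDist (f u) (f v)) :
    ∃ S : Finset (V × V), S.card ≤ Fintype.card V - 1 ∧
      (∀ e ∈ S, G.Adj e.1 e.2) ∧
      (∀ r s : V, G.Adj r s → ∃ e ∈ S, Winkler G e.1 e.2 r s) := by
  classical
  obtain ⟨d, f, hf⟩ := hcube
  obtain ⟨T, hTG, hT⟩ := hconn.exists_isTree_le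
  refine ⟨T.edgeFinset.image Quot.out,
    card_image_le.trans (by have := hT.card_edgeFinset; omega), ?_, ?_⟩
  · simp only [mem_image, mem_edgeFinset]
    rintro _ ⟨e, he, rfl⟩
    exact hTG (adj_out_of_mem_edgeSet he)
  · intro r s hrs
    obtain ⟨i, hi⟩ := exists_flip_of_adj hf hrs
    obtain ⟨x, -, hx⟩ := (hT.connected r s).some.exists_dart_ne (f · i) ((hi i).2 rfl)
    have hout : f s(x.fst, x.snd).out.1 i ≠ f s(x.fst, x.snd).out.2 i := by
      rcases Sym2.out_mk_eq_or_eq_swap x.fst x.snd with h | h <;> rw [h]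
      exacts [hx, hx.symm]
    exact ⟨_, mem_image_of_mem _ (mem_edgeFinset.2 x.edge_mem),
      winkler_of_flip hf (hTG (adj_out_of_mem_edgeSet x.edge_mem)) hrs hout ((hi i).2 rfl)⟩

/-- A partial cube on `n` vertices has a set of at most `n - 1` edges meeting every
Winkler class; hence `∼_G` has at most `n - 1` equivalence classes. -/
theorem partialCube_at_most_n_sub_one_classes
    {V : Type*} [Fintype V] [DecidableEq V] (G : SimpleGraph V)
    (hconn : G.Connected)
    (hcube : ∃ (d : ℕ) (f : V → Fin d → Bool),
        ∀ u v : V, G.dist u v = hammingDist (f u) (f v)) :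
    ∃ S : Finset (V × V), S.card ≤ Fintype.card V - 1 ∧
      (∀ e ∈ S, G.Adj e.1 e.2) ∧
      (∀ r s : V, G.Adj r s → ∃ e ∈ S, Winkler G e.1 e.2 r s) :=
  partialCube_at_most_n_sub_one_classes_general G hconn hcube
end

section
/- Let G be a partial cube, let pq be an edge of G, and let x and y be vertices with x ∈ S_pq and y ∈ S_qp. Then every shortest path from x to y (that is, every walk from x to y whose length equals d(x,y)) contains exactly one edge of [pq]. -/
noncomputable instance {V : Type*} (G : SimpleGraph V) (p q r s : V) :
    Decidable (Winkler G p q r s) :=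
  inferInstanceAs (Decidable (_ ≠ _))

/-!
Fix an isometric embedding `f` of `G` into a hypercube. The edge `pq` flips exactly one
coordinate `i`, and comparing `d(c, p)` with `d(c, q)` only sees that coordinate:
`d(c, q) - d(c, p)` is `+1` or `-1` according as `c` agrees with `p` or with `q` at `i`.
Hence `rs ∼ pq` means exactly that `r` and `s` differ at `i`, while `x` agrees with `p` and `y`
with `q` there. Along a shortest path, which is also a shortest path in the hypercube, every
coordinate flips at most once, so the coordinate `i` flips exactly once.
-/

open Finset SimpleGraph

section Hamming

variable {ι : Type*} [Fintype ι] {β : ι → Type*} [∀ k, DecidableEq (β k)]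

theorem hammingDist_eq_sum_ite (x y : ∀ k, β k) :
    hammingDist x y = ∑ k, if x k ≠ y k then 1 else 0 :=
  card_filter _ _

theorem ite_ne_eq_add_of_hammingDist_eq_add {a b c : ∀ k, β k}
    (h : hammingDist a c = hammingDist a b + hammingDist b c) (k : ι) :
    (if a k ≠ c k then 1 else 0) =
      (if a k ≠ b k then 1 else 0) + if b k ≠ c k then 1 else 0 := by
  have hle (k : ι) : (if a k ≠ c k then 1 else 0) ≤
      (if a k ≠ b k then 1 else 0) + if b k ≠ c k then 1 else 0 := by
    split_ifs <;> simp_all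
  simp only [hammingDist_eq_sum_ite, ← sum_add_distrib] at h
  exact (sum_eq_sum_iff_of_le fun k _ => hle k).1 h k (mem_univ k)

theorem exists_ne_iff_eq_of_hammingDist_eq_one {a b : ∀ k, β k} (h : hammingDist a b = 1) :
    ∃ i, ∀ k, a k ≠ b k ↔ k = i := by
  obtain ⟨i, hi⟩ := card_eq_one.1 h
  exact ⟨i, fun k => by simpa using congrArg (k ∈ ·) hi⟩

theorem hammingDist_sub_hammingDist_eq [DecidableEq ι] {a b : ι → Bool} {i : ι}
    (hab : ∀ k, a k ≠ b k ↔ k = i) (c : ι → Bool) :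
    (hammingDist c b : ℤ) - hammingDist c a = if c i = a i then 1 else -1 := by
  have hrest : ∑ k ∈ univ.erase i, (if c k ≠ b k then 1 else 0) =
      ∑ k ∈ univ.erase i, (if c k ≠ a k then 1 else 0) := by
    refine sum_congr rfl fun k hk => ?_
    rw [not_not.1 (mt (hab k).1 (ne_of_mem_erase hk))]
  have hbi : b i = !a i := by
    have := (hab i).2 rfl
    cases hai : a i <;> simp_all
  simp only [hammingDist_eq_sum_ite, ← sum_erase_add _ _ (mem_univ i), hrest, hbi]
  cases c i <;> cases a i <;> simp

end Hamming

section Walk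

variable {V : Type*} {G : SimpleGraph V} {ι : Type*} [Fintype ι] {β : ι → Type*}
  [∀ k, DecidableEq (β k)] {f : V → ∀ k, β k}

theorem hammingDist_le_length (hf : ∀ u v, G.Adj u v → hammingDist (f u) (f v) ≤ 1)
    {x y : V} (w : G.Walk x y) : hammingDist (f x) (f y) ≤ w.length := by
  induction w with
  | nil => simp
  | @cons u v y huv w ih =>
    have := hammingDist_triangle (f u) (f v) (f y)
    have := hf u v huv
    simp only [Walk.length_cons]
    omega

theorem countP_darts_ne_of_length_eq (hf : ∀ u v, G.Adj u v → hammingDist (f u) (f v) ≤ 1)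
    {x y : V} (w : G.Walk x y) (hw : w.length = hammingDist (f x) (f y)) (k : ι) :
    (w.darts.countP fun d => f d.fst k ≠ f d.snd k) = if f x k ≠ f y k then 1 else 0 := by
  induction w with
  | nil => simp
  | @cons u v y huv w ih =>
    have htail := hammingDist_le_length hf w
    have htri := hammingDist_triangle (f u) (f v) (f y)
    have huv1 := hf u v huv
    simp only [Walk.length_cons] at hw
    have hsplit : hammingDist (f u) (f y) = hammingDist (f u) (f v) + hammingDist (f v) (f y) := by
      omega
    rw [Walk.darts_cons, List.countP_cons, ih (by omega),
      ite_ne_eq_add_of_hammingDist_eq_add hsplit k]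
    by_cases h : f u k = f v k <;> simp [h, add_comm]

end Walk

section PartialCube

variable {V : Type*} {G : SimpleGraph V} {ι : Type*} [Fintype ι] [DecidableEq ι]
  {f : V → ι → Bool} {p q : V} {i : ι}

theorem dist_lt_dist_iff_apply_eq (hf : ∀ u v, G.dist u v = hammingDist (f u) (f v))
    (hi : ∀ k, f p k ≠ f q k ↔ k = i) (c : V) :
    G.dist c p < G.dist c q ↔ f c i = f p i := by
  have h := hammingDist_sub_hammingDist_eq hi (f c)
  rw [hf, hf]
  split_ifs at h with hc
  · simp only [hc, iff_true]
    omega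
  · simp only [hc, iff_false, not_lt]
    omega

theorem winkler_iff_apply_ne (hf : ∀ u v, G.dist u v = hammingDist (f u) (f v))
    (hi : ∀ k, f p k ≠ f q k ↔ k = i) (r s : V) :
    Winkler G p q r s ↔ f r i ≠ f s i := by
  have hdiff : Winkler G p q r s ↔
      (hammingDist (f r) (f q) : ℤ) - hammingDist (f r) (f p) ≠
        (hammingDist (f s) (f q) : ℤ) - hammingDist (f s) (f p) := by
    rw [Winkler, hf p r, hf q s, hf p s, hf q r, hammingDist_comm (f p), hammingDist_comm (f q),
      hammingDist_comm (f p), hammingDist_comm (f q), ne_eq, ne_eq, not_iff_not]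
    constructor <;> intro h <;> omega
  rw [hdiff, hammingDist_sub_hammingDist_eq hi, hammingDist_sub_hammingDist_eq hi]
  cases f r i <;> cases f s i <;> cases f p i <;> simp

end PartialCube

theorem partialCube_shortest_path_crosses_class_once_general
    {V : Type*} (G : SimpleGraph V)
    (hcube : ∃ (d : ℕ) (f : V → Fin d → Bool),
        ∀ u v : V, G.dist u v = hammingDist (f u) (f v))
    {p q : V} (hpq : G.Adj p q) {x y : V}
    (hx : G.dist x p < G.dist x q) (hy : G.dist y q < G.dist y p)
    (w : G.Walk x y) (hw : w.length = G.dist x y) :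
    (w.darts.countP fun d => Winkler G p q d.toProd.1 d.toProd.2) = 1 := by
  obtain ⟨d, f, hf⟩ := hcube
  have hf_adj (u v : V) (huv : G.Adj u v) : hammingDist (f u) (f v) ≤ 1 := by
    rw [← hf, dist_eq_one_iff_adj.2 huv]
  obtain ⟨i, hi⟩ := exists_ne_iff_eq_of_hammingDist_eq_one
    (by rw [← hf, dist_eq_one_iff_adj.2 hpq] : hammingDist (f p) (f q) = 1)
  have hxi : f x i = f p i := (dist_lt_dist_iff_apply_eq hf hi x).1 hx
  have hyi : f y i = f q i :=
    (dist_lt_dist_iff_apply_eq hf (fun k => ne_comm.trans (hi k)) y).1 hy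
  simp only [winkler_iff_apply_ne hf hi]
  rw [countP_darts_ne_of_length_eq hf_adj w (hw.trans (hf x y)) i, hxi, hyi]
  simp [(hi i).2 rfl]

/-- In a partial cube, a shortest path from a vertex of `S_pq` to a vertex of
`S_qp` uses exactly one edge of the class `[pq]`. -/
theorem partialCube_shortest_path_crosses_class_once
    {V : Type*} [Fintype V] (G : SimpleGraph V) (hconn : G.Connected)
    (hcube : ∃ (d : ℕ) (f : V → Fin d → Bool),
        ∀ u v : V, G.dist u v = hammingDist (f u) (f v))
    {p q : V} (hpq : G.Adj p q) {x y : V}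
    (hx : G.dist x p < G.dist x q) (hy : G.dist y q < G.dist y p)
    (w : G.Walk x y) (hw : w.length = G.dist x y) :
    (w.darts.countP fun d => Winkler G p q d.toProd.1 d.toProd.2) = 1 :=
  partialCube_shortest_path_crosses_class_once_general G hcube hpq hx hy w hw
end

section
/- Let G be a finite connected simple graph with an isometric hypercube labeling f : V(G) → {0,1}^d (so that d(u,v) equals the Hamming distance between f(u) and f(v) for all vertices u, v), let pq be an edge of G, and let i be a coordinate with f(p)_i ≠ f(q)_i. Then for every edge rs of G, pq ∼_G rs if and only if f(r)_i ≠ f(s)_i; that is, two edges are related by Winkler's relation exactly when their endpoints' labels differ in the same coordinate. -/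
/-- With an isometric hypercube labeling, for an edge `pq` whose labels differ in
coordinate `i`, an edge `rs` is Winkler-related to `pq` iff the labels of `r` and
`s` also differ in coordinate `i`. -/
theorem winkler_iff_same_coordinate
    {V : Type*} [Fintype V] (G : SimpleGraph V) (hconn : G.Connected)
    {d : ℕ} (f : V → Fin d → Bool)
    (hf : ∀ u v : V, G.dist u v = hammingDist (f u) (f v))
    {p q : V} (hpq : G.Adj p q) {i : Fin d} (hi : f p i ≠ f q i) :
    ∀ r s : V, G.Adj r s → (Winkler G p q r s ↔ f r i ≠ f s i) := by
  intro r s hrs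
  have key : ∀ u v : V, G.dist u v = ∑ k : Fin d, (if f u k ≠ f v k then 1 else 0) := by
    intro u v
    rw [hf, hammingDist, Finset.card_filter]
  -- p and q agree outside coordinate i
  have hone : hammingDist (f p) (f q) = 1 := by
    rw [← hf, SimpleGraph.dist_eq_one_iff_adj]; exact hpq
  have hfp : ∀ k : Fin d, k ≠ i → f p k = f q k := by
    intro k hk
    by_contra hne
    have h2 : 2 ≤ hammingDist (f p) (f q) := by
      rw [hammingDist]
      have : ({k, i} : Finset (Fin d)) ⊆ Finset.univ.filter (fun j => f p j ≠ f q j) := by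
        intro j hj
        simp only [Finset.mem_insert, Finset.mem_singleton] at hj
        rcases hj with rfl | rfl <;> simp [hne, hi]
      calc 2 = ({k, i} : Finset (Fin d)).card := by rw [Finset.card_insert_of_notMem (by simpa using hk)]; simp
        _ ≤ _ := Finset.card_le_card this
    omega
  set A : Fin d → ℕ := fun k => (if f p k ≠ f r k then 1 else 0) + (if f q k ≠ f s k then 1 else 0) with hA
  set B : Fin d → ℕ := fun k => (if f p k ≠ f s k then 1 else 0) + (if f q k ≠ f r k then 1 else 0) with hB
  have hsum : Winkler G p q r s ↔ ∑ k, A k ≠ ∑ k, B k := by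
    unfold Winkler
    rw [key p r, key q s, key p s, key q r, ← Finset.sum_add_distrib, ← Finset.sum_add_distrib]
  have hAB : ∀ k ∈ ({i}ᶜ : Finset (Fin d)), A k = B k := by
    intro k hk
    have hk' : k ≠ i := by simpa using hk
    simp only [hA, hB, hfp k hk']
    exact add_comm _ _
  have hsplit : (Winkler G p q r s ↔ A i ≠ B i) := by
    have hc : ∑ k ∈ ({i}ᶜ : Finset (Fin d)), A k = ∑ k ∈ ({i}ᶜ : Finset (Fin d)), B k :=
      Finset.sum_congr rfl hAB
    rw [hsum, Fintype.sum_eq_add_sum_compl i A, Fintype.sum_eq_add_sum_compl i B, hc]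
    omega
  rw [hsplit]
  simp only [hA, hB]
  cases hp : f p i <;> cases hq : f q i <;> cases hr : f r i <;> cases hs : f s i <;>
    simp_all
end

section
/- Let G be a partial cube and let pq be an edge of G. Then the subgraph of G induced on the semicube S_pq is connected. -/
open Finset SimpleGraph

/-- If `x` and `y` differ exactly at coordinate `i`, and `x` agrees with `z` at `i`,
then `y` is one step farther from `z` than `x` is. -/
private lemma ham_step {d : ℕ} {x y z : Fin d → Bool} {i : Fin d}
    (h1 : x i ≠ y i) (h2 : ∀ j, j ≠ i → x j = y j) (h3 : x i = z i) :
    hammingDist y z = hammingDist x z + 1 := by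
  classical
  have hiA : i ∉ Finset.univ.filter (fun j => x j ≠ z j) := by
    simp [h3]
  have hY : Finset.univ.filter (fun j => y j ≠ z j)
      = insert i (Finset.univ.filter (fun j => x j ≠ z j)) := by
    ext j
    by_cases hj : j = i
    · subst hj
      have : y j ≠ z j := by
        intro h; exact h1 (h3.trans h.symm)
      simp [this]
    · simp [Finset.mem_insert, hj, h2 j hj]
  simp only [hammingDist]
  rw [hY, Finset.card_insert_of_notMem hiA]

/-- If `hammingDist x y = 1` and `x i ≠ y i`, then `x` and `y` agree elsewhere. -/
private lemma ham_one_unique {d : ℕ} {x y : Fin d → Bool} {i : Fin d}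
    (h1 : hammingDist x y = 1) (hi : x i ≠ y i) :
    ∀ j, j ≠ i → x j = y j := by
  classical
  rw [hammingDist, Finset.card_eq_one] at h1
  obtain ⟨a, ha⟩ := h1
  have hia : i ∈ Finset.univ.filter (fun j => x j ≠ y j) := by simp [hi]
  rw [ha, Finset.mem_singleton] at hia
  intro j hj
  by_contra hne
  have : j ∈ Finset.univ.filter (fun j => x j ≠ y j) := by simp [hne]
  rw [ha, Finset.mem_singleton] at this
  exact hj (this.trans hia.symm)

/-- In a partial cube, the subgraph induced on a semicube `S_pq` is connected. -/
theorem partialCube_semicube_connected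
    {V : Type*} [Fintype V] (G : SimpleGraph V) (hconn : G.Connected)
    (hcube : ∃ (d : ℕ) (f : V → Fin d → Bool),
        ∀ u v : V, G.dist u v = hammingDist (f u) (f v))
    {p q : V} (hpq : G.Adj p q) :
    (G.induce {v : V | G.dist v p < G.dist v q}).Connected := by
  classical
  obtain ⟨d, f, hf⟩ := hcube
  set S : Set V := {v : V | G.dist v p < G.dist v q} with hS
  have hdist1 : G.dist p q = 1 := SimpleGraph.dist_eq_one_iff_adj.mpr hpq
  have hham1 : hammingDist (f p) (f q) = 1 := by rw [← hf]; exact hdist1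
  obtain ⟨i, hi⟩ : ∃ i, f p i ≠ f q i := by
    by_contra h
    push_neg at h
    have : hammingDist (f p) (f q) = 0 := hammingDist_eq_zero.mpr (funext h)
    omega
  have hother : ∀ j, j ≠ i → f p j = f q j := ham_one_unique hham1 hi
  -- characterization of the semicube by coordinate `i`
  have hchar : ∀ v, v ∈ S ↔ f v i = f p i := by
    intro v
    have hvp : G.dist v p = hammingDist (f p) (f v) := by
      rw [hf]; exact hammingDist_comm _ _
    have hvq : G.dist v q = hammingDist (f q) (f v) := by
      rw [hf]; exact hammingDist_comm _ _
    constructor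
    · intro hv
      by_contra hne
      have h3 : f q i = f v i := by
        revert hi hne; cases f v i <;> cases f p i <;> cases f q i <;> simp
      have := ham_step (x := f q) (y := f p) (z := f v)
        (fun h => hi h.symm) (fun j hj => (hother j hj).symm) h3
      have hv' : G.dist v p < G.dist v q := hv
      omega
    · intro hv
      have := ham_step (x := f p) (y := f q) (z := f v) hi hother hv.symm
      show G.dist v p < G.dist v q
      omega
  -- geodesics between semicube vertices stay in the semicube
  have key : ∀ (n : ℕ) (u v : V) (hu : f u i = f p i) (hv : f v i = f p i),
      G.dist u v = n →
      (G.induce S).Reachable ⟨u, (hchar u).mpr hu⟩ ⟨v, (hchar v).mpr hv⟩ := by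
    intro n
    induction n with
    | zero =>
      intro u v hu hv h0
      have : u = v := hconn.dist_eq_zero_iff.mp h0
      subst this
      exact Reachable.refl _
    | succ n ih =>
      intro u v hu hv hdist
      have hne : G.dist u v ≠ 0 := by omega
      obtain ⟨w, hw⟩ := G.exists_walk_of_dist_ne_zero hne
      cases w with
      | nil => rw [SimpleGraph.dist_self] at hdist
      | @cons _ u' _ hadj w' =>
        have hlen : w'.length = n := by
          simp only [SimpleGraph.Walk.length_cons] at hw; omega
        have hle : G.dist u' v ≤ n := hlen ▸ SimpleGraph.dist_le w'
        have htri : G.dist u v ≤ G.dist u u' + G.dist u' v := hconn.dist_triangle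
        have hduu' : G.dist u u' = 1 := SimpleGraph.dist_eq_one_iff_adj.mpr hadj
        have hdist' : G.dist u' v = n := by omega
        -- the flipped coordinate is not `i`
        have hu' : f u' i = f u i := by
          by_contra hne'
          have hham' : hammingDist (f u) (f u') = 1 := by rw [← hf]; exact hduu'
          have hne2 : f u i ≠ f u' i := fun h => hne' h.symm
          have hoth' : ∀ j, j ≠ i → f u j = f u' j := ham_one_unique hham' hne2
          have := ham_step (x := f u) (y := f u') (z := f v) hne2 hoth'
            (hu.trans hv.symm)
          have h1 : G.dist u' v = hammingDist (f u') (f v) := hf u' v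
          have h2 : G.dist u v = hammingDist (f u) (f v) := hf u v
          omega
        have hadj' : (G.induce S).Adj ⟨u, (hchar u).mpr hu⟩
            ⟨u', (hchar u').mpr (hu'.trans hu)⟩ := hadj
        exact hadj'.reachable.trans (ih u' v (hu'.trans hu) hv hdist')
  rw [SimpleGraph.connected_iff]
  constructor
  · rintro ⟨u, hu⟩ ⟨v, hv⟩
    have hu' : f u i = f p i := (hchar u).mp hu
    have hv' : f v i = f p i := (hchar v).mp hv
    exact key (G.dist u v) u v hu' hv' rfl
  · refine ⟨⟨p, ?_⟩⟩
    show G.dist p p < G.dist p q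
    rw [SimpleGraph.dist_self, hdist1]
    omega
end

section
/- Let G be a finite connected simple graph with an isometric hypercube labeling f : V(G) → {0,1}^{d+1} (so that d(u,v) equals the Hamming distance between f(u) and f(v) for all vertices u, v), and let i be one of the d+1 coordinates. Define g : V(G) → {0,1}^d by deleting coordinate i from f, and let G′ be the simple graph whose vertex set is the image {g(v) : v ∈ V(G)} with x adjacent to y if and only if x ≠ y and there exist adjacent vertices u, v of G with g(u) = x and g(v) = y. Then G′ is connected, and for all vertices u, v of G the graph distance in G′ between g(u) and g(v) equals the Hamming distance between g(u) and g(v); in particular, G′ is a partial cube. -/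
/-!
Deleting coordinate `i` cannot increase Hamming distances, and the labels of adjacent vertices
of `G` differ in one coordinate, so adjacent vertices of `G'` are at Hamming distance one and
`G'`-distances dominate Hamming distances. Conversely, walk along a geodesic of `G` from `u` to
`v`: each step either fixes `g` or is an edge of `G'`, and since Hamming betweenness is
coordinatewise, the projected steps still lie on a Hamming geodesic from `g u` to `g v`, so the
projected walk has length at most `hammingDist (g u) (g v)`.
-/

open SimpleGraph Set

section Hamming

variable {β : Type*} [DecidableEq β] {n : ℕ}

theorem hammingDist_eq_ite_add_hammingDist_succAbove (x y : Fin (n + 1) → β) (i : Fin (n + 1)) :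
    hammingDist x y = (if x i = y i then 0 else 1) +
      hammingDist (fun j => x (i.succAbove j)) (fun j => y (i.succAbove j)) := by
  simp only [hammingDist, Finset.card_filter, Fin.sum_univ_succAbove _ i, ite_not]

theorem hammingDist_succAbove_le (x y : Fin (n + 1) → β) (i : Fin (n + 1)) :
    hammingDist (fun j => x (i.succAbove j)) (fun j => y (i.succAbove j)) ≤ hammingDist x y := by
  rw [hammingDist_eq_ite_add_hammingDist_succAbove x y i]
  omega

theorem hammingDist_succAbove_eq_add_of_eq_add {x y z : Fin (n + 1) → β} (i : Fin (n + 1))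
    (h : hammingDist x z = hammingDist x y + hammingDist y z) :
    hammingDist (fun j => x (i.succAbove j)) (fun j => z (i.succAbove j)) =
      hammingDist (fun j => x (i.succAbove j)) (fun j => y (i.succAbove j)) +
        hammingDist (fun j => y (i.succAbove j)) (fun j => z (i.succAbove j)) := by
  have htri := hammingDist_triangle (fun j => x (i.succAbove j)) (fun j => y (i.succAbove j))
    (fun j => z (i.succAbove j))
  rw [hammingDist_eq_ite_add_hammingDist_succAbove x z i,
    hammingDist_eq_ite_add_hammingDist_succAbove x y i,
    hammingDist_eq_ite_add_hammingDist_succAbove y z i] at h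
  split_ifs at h <;> first | omega | simp_all

variable {W ι : Type*} [Fintype ι] {H : SimpleGraph W}

theorem hammingDist_le_length_s19 (c : W → ι → β)
    (hc : ∀ a b, H.Adj a b → hammingDist (c a) (c b) ≤ 1) {a b : W} (p : H.Walk a b) :
    hammingDist (c a) (c b) ≤ p.length := by
  induction p with
  | nil => simp
  | @cons a b _ hab _ ih =>
    calc hammingDist (c a) _ ≤ hammingDist (c a) (c b) + hammingDist (c b) _ :=
          hammingDist_triangle _ _ _
      _ ≤ 1 + _ := add_le_add (hc a b hab) ih
      _ = _ := by rw [Walk.length_cons, add_comm]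

theorem hammingDist_le_dist (c : W → ι → β)
    (hc : ∀ a b, H.Adj a b → hammingDist (c a) (c b) ≤ 1) {a b : W} (h : H.Reachable a b) :
    hammingDist (c a) (c b) ≤ H.dist a b := by
  obtain ⟨p, hp⟩ := h.exists_walk_length_eq_dist
  exact hp ▸ hammingDist_le_length_s19 c hc p

end Hamming

namespace SimpleGraph

variable {V W : Type*} {G : SimpleGraph V} {g : V → W} {G' : SimpleGraph (range g)}

def IsImageGraph (G : SimpleGraph V) (g : V → W) (G' : SimpleGraph (range g)) :
    Prop :=
  ∀ x y : range g, G'.Adj x y ↔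
    x ≠ y ∧ ∃ u v : V, G.Adj u v ∧ g u = (x : W) ∧ g v = (y : W)

theorem IsImageGraph.eq_or_adj (hG' : G.IsImageGraph g G') {u v : V}
    (h : G.Adj u v) :
    rangeFactorization g u = rangeFactorization g v ∨
      G'.Adj (rangeFactorization g u) (rangeFactorization g v) := by
  by_cases heq : rangeFactorization g u = rangeFactorization g v
  · exact .inl heq
  · exact .inr ((hG' _ _).2 ⟨heq, u, v, h, rfl, rfl⟩)

theorem IsImageGraph.reachable (hG' : G.IsImageGraph g G') {u v : V}
    (h : G.Reachable u v) : G'.Reachable (rangeFactorization g u) (rangeFactorization g v) := by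
  rw [reachable_iff_reflTransGen] at h ⊢
  refine h.lift' _ fun a b hab => ?_
  rcases hG'.eq_or_adj hab with heq | hadj
  · rw [Function.onFun, heq]
  · exact .single hadj

theorem IsImageGraph.connected (hG' : G.IsImageGraph g G') (h : G.Connected) :
    G'.Connected := by
  have : Nonempty V := h.nonempty
  refine ⟨fun x y => ?_⟩
  obtain ⟨u, rfl⟩ := rangeFactorization_surjective x
  obtain ⟨v, rfl⟩ := rangeFactorization_surjective y
  exact hG'.reachable (h u v)

theorem IsImageGraph.dist_le_hammingDist_of_adj {β ι : Type*} [DecidableEq β]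
    [Fintype ι] {g : V → ι → β} {G' : SimpleGraph (range g)} (hG' : G.IsImageGraph g G')
    {u v : V} (h : G.Adj u v) :
    G'.Reachable (rangeFactorization g u) (rangeFactorization g v) ∧
      G'.dist (rangeFactorization g u) (rangeFactorization g v) ≤ hammingDist (g u) (g v) := by
  rcases hG'.eq_or_adj h with heq | hadj
  · simp [heq]
  · refine ⟨hadj.reachable, ?_⟩
    rw [dist_eq_one_iff_adj.2 hadj, Nat.one_le_iff_ne_zero, hammingDist_ne_zero]
    exact fun heq => hadj.ne (Subtype.ext heq)

end SimpleGraph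

section DeleteCoordinate

variable {V β : Type*} [DecidableEq β] {G : SimpleGraph V} {d : ℕ}
  {f : V → Fin (d + 1) → β} {i : Fin (d + 1)} {g : V → Fin d → β}
  {G' : SimpleGraph (range g)}

theorem hammingDist_le_one_of_adj_of_isImageGraph (hG' : G.IsImageGraph g G')
    (hf : ∀ u v : V, G.dist u v = hammingDist (f u) (f v))
    (hg : g = fun v j => f v (i.succAbove j)) {x y : range g} (h : G'.Adj x y) :
    hammingDist (x : Fin d → β) y ≤ 1 := by
  obtain ⟨-, u, v, huv, hu, hv⟩ := (hG' x y).1 h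
  calc hammingDist (x : Fin d → β) y = hammingDist (g u) (g v) := by rw [hu, hv]
    _ ≤ hammingDist (f u) (f v) := by simp only [hg]; exact hammingDist_succAbove_le _ _ i
    _ = 1 := by rw [← hf, dist_eq_one_iff_adj.2 huv]

theorem dist_le_hammingDist_of_isImageGraph (hG' : G.IsImageGraph g G')
    (hf : ∀ u v : V, G.dist u v = hammingDist (f u) (f v))
    (hg : g = fun v j => f v (i.succAbove j)) {u v : V} (p : G.Walk u v)
    (hp : p.length ≤ hammingDist (f u) (f v)) :
    G'.dist (rangeFactorization g u) (rangeFactorization g v) ≤ hammingDist (g u) (g v) := by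
  induction p with
  | nil => simp
  | @cons u w v huw q ih =>
    have huw1 : hammingDist (f u) (f w) = 1 := by rw [← hf, dist_eq_one_iff_adj.2 huw]
    have htri := hammingDist_triangle (f u) (f w) (f v)
    have hwv : hammingDist (f w) (f v) ≤ q.length := hf w v ▸ dist_le q
    rw [Walk.length_cons] at hp
    have hbetween :
        hammingDist (f u) (f v) = hammingDist (f u) (f w) + hammingDist (f w) (f v) := by
      omega
    obtain ⟨hreach, huw'⟩ := hG'.dist_le_hammingDist_of_adj huw
    calc G'.dist (rangeFactorization g u) (rangeFactorization g v)
        ≤ G'.dist (rangeFactorization g u) (rangeFactorization g w) +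
            G'.dist (rangeFactorization g w) (rangeFactorization g v) :=
          hreach.dist_triangle_left _
      _ ≤ hammingDist (g u) (g w) + hammingDist (g w) (g v) := add_le_add huw' (ih (by omega))
      _ = hammingDist (g u) (g v) := by
          simp only [hg]; exact (hammingDist_succAbove_eq_add_of_eq_add i hbetween).symm

end DeleteCoordinate

theorem contract_coordinate_partialCube_general
    {V : Type*} (G : SimpleGraph V) (hconn : G.Connected)
    {d : ℕ} (f : V → Fin (d + 1) → Bool)
    (hf : ∀ u v : V, G.dist u v = hammingDist (f u) (f v))
    (i : Fin (d + 1)) :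
    ∀ (g : V → Fin d → Bool), g = (fun v j => f v (i.succAbove j)) →
    ∀ (G' : SimpleGraph (Set.range g)),
      (∀ x y : Set.range g, G'.Adj x y ↔
        x ≠ y ∧ ∃ u v : V, G.Adj u v ∧ g u = (x : Fin d → Bool) ∧
          g v = (y : Fin d → Bool)) →
      G'.Connected ∧
        ∀ x y : Set.range g,
          G'.dist x y = hammingDist (x : Fin d → Bool) (y : Fin d → Bool) := by
  intro g hg G' (hG' : G.IsImageGraph g G')
  have hconn' : G'.Connected := hG'.connected hconn
  refine ⟨hconn', fun x y => ?_⟩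
  obtain ⟨u, rfl⟩ := rangeFactorization_surjective x
  obtain ⟨v, rfl⟩ := rangeFactorization_surjective y
  obtain ⟨p, hp⟩ := (hconn u v).exists_walk_length_eq_dist
  exact le_antisymm (dist_le_hammingDist_of_isImageGraph hG' hf hg p (hp.trans (hf u v)).le)
    (hammingDist_le_dist Subtype.val
      (fun _ _ => hammingDist_le_one_of_adj_of_isImageGraph hG' hf hg) (hconn' _ _))

/-- Deleting one coordinate from an isometric hypercube labeling and contracting
accordingly: the graph on the image labels, with adjacency inherited from `G`,
is connected and isometrically embedded in the smaller hypercube by the identity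
labeling; in particular it is a partial cube. -/
theorem contract_coordinate_partialCube
    {V : Type*} [Fintype V] (G : SimpleGraph V) (hconn : G.Connected)
    {d : ℕ} (f : V → Fin (d + 1) → Bool)
    (hf : ∀ u v : V, G.dist u v = hammingDist (f u) (f v))
    (i : Fin (d + 1)) :
    ∀ (g : V → Fin d → Bool), g = (fun v j => f v (i.succAbove j)) →
    ∀ (G' : SimpleGraph (Set.range g)),
      (∀ x y : Set.range g, G'.Adj x y ↔
        x ≠ y ∧ ∃ u v : V, G.Adj u v ∧ g u = (x : Fin d → Bool) ∧
          g v = (y : Fin d → Bool)) →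
      G'.Connected ∧
        ∀ x y : Set.range g,
          G'.dist x y = hammingDist (x : Fin d → Bool) (y : Fin d → Bool) :=
  contract_coordinate_partialCube_general G hconn f hf i
end
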